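/- arXiv:0707.0185 — 2 statements merged into one kernel-verified Lean document; each statement's English description precedes it below -/
import Mathlib

section
/- Let α > 0, let (r_i)_{i ≥ 1} be a sequence of real numbers with r_{i+1} ≥ r_i + 1 for all i ≥ 1, and let (v_i)_{i ≥ 1} be a sequence of real numbers such that v_{i+1} · exp(2α r_i) ≤ 1 for all i ≥ 1 and v_i · exp(2α r_i) ≥ 1 for all i ≥ 1. Then for every integer k ≥ 1, Σ_{i=1}^{k} (v_i − v_{i+1}) · exp(2α r_i) ≥ v₁ · exp(2α r₁) + (k − 1)(1 − exp(−2α)) − 1. -/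
/-!
Abel summation rewrites the sum as `v 1 E 1 + ∑_{i=2}^{k} v i (E i - E (i-1)) - v (k+1) E k`
with `E i = exp (2α r i)`. Since `r` grows by at least `1` per step, `E (i-1) ≤ exp (-2α) E i`,
so each middle term is at least `v i E i (1 - exp (-2α)) ≥ 1 - exp (-2α)`, and the last term is
at most `1`.
-/

open Filter Real Finset

theorem le_sum_Icc_sub_mul_of_le_mul_sub {v E : ℕ → ℝ} {c : ℝ}
    (hc : ∀ i, 1 ≤ i → c ≤ v (i + 1) * (E (i + 1) - E i)) {k : ℕ} (hk : 1 ≤ k) :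
    v 1 * E 1 + ((k : ℝ) - 1) * c - v (k + 1) * E k
      ≤ ∑ i ∈ Icc 1 k, (v i - v (i + 1)) * E i := by
  induction k, hk using Nat.le_induction with
  | base => simp only [Icc_self, sum_singleton, Nat.cast_one]; linarith
  | succ k hk ih =>
    rw [sum_Icc_succ_top (by omega)]
    push_cast
    linarith [hc k hk]

theorem one_sub_exp_neg_le_mul_exp_sub_exp {t x y v : ℝ} (ht : 0 ≤ t) (hxy : x + t ≤ y)
    (hv : 1 ≤ v * exp y) : 1 - exp (-t) ≤ v * (exp y - exp x) := by
  have hv_nonneg : 0 ≤ v := by nlinarith [exp_pos y]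
  have hx : exp x ≤ exp y * exp (-t) := by
    rw [← exp_add]
    exact exp_le_exp.2 (by linarith)
  calc 1 - exp (-t) ≤ v * exp y * (1 - exp (-t)) :=
        le_mul_of_one_le_left (sub_nonneg.2 (exp_le_one_iff.2 (by linarith))) hv
    _ = v * (exp y - exp y * exp (-t)) := by ring
    _ ≤ v * (exp y - exp x) := by gcongr

/-- Abel-summation lower bound: if `r (i+1) ≥ r i + 1`, `v (i+1) * exp (2α r i) ≤ 1`
and `v i * exp (2α r i) ≥ 1` for all `i ≥ 1`, then for every `k ≥ 1`,
`∑_{i=1}^{k} (v i − v (i+1)) * exp (2α r i)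
  ≥ v 1 * exp (2α r 1) + (k − 1) (1 − exp (−2α)) − 1`. -/
theorem stmt4 (α : ℝ) (hα : 0 < α) (r v : ℕ → ℝ)
    (hr : ∀ i, 1 ≤ i → r i + 1 ≤ r (i + 1))
    (hv1 : ∀ i, 1 ≤ i → v (i + 1) * Real.exp (2 * α * r i) ≤ 1)
    (hv2 : ∀ i, 1 ≤ i → 1 ≤ v i * Real.exp (2 * α * r i)) :
    ∀ k : ℕ, 1 ≤ k →
      v 1 * Real.exp (2 * α * r 1) + ((k : ℝ) - 1) * (1 - Real.exp (-(2 * α))) - 1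
        ≤ ∑ i ∈ Finset.Icc 1 k, (v i - v (i + 1)) * Real.exp (2 * α * r i) := by
  intro k hk
  have hincrement : ∀ i, 1 ≤ i → 1 - exp (-(2 * α))
      ≤ v (i + 1) * (exp (2 * α * r (i + 1)) - exp (2 * α * r i)) := fun i hi =>
    one_sub_exp_neg_le_mul_exp_sub_exp (by positivity)
      (by nlinarith [hr i hi]) (hv2 (i + 1) (by omega))
  linarith [le_sum_Icc_sub_mul_of_le_mul_sub (E := fun i ↦ exp (2 * α * r i)) hincrement hk, hv1 k hk]
end

section
/- Let α > 0, let (r_i)_{i ≥ 1} be a sequence of real numbers with r_{i+1} ≥ r_i + 1 for all i ≥ 1, and let (v_i)_{i ≥ 1} be a sequence of real numbers such that v_{i+1} · exp(2α r_i) ≤ 1 for all i ≥ 1 and v_i · exp(2α r_i) ≥ 1 for all i ≥ 1. Then the partial sums Σ_{i=1}^{k} (v_i − v_{i+1}) · exp(2α r_i) tend to +∞ as k → ∞. -/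
open Filter Real Finset

/-!
With `aᵢ = vᵢ e^{2α rᵢ}` and `bᵢ = vᵢ₊₁ e^{2α rᵢ}` the partial sum is `∑ (aᵢ - bᵢ)`. Regroup it as
`a₁ - b_k + ∑_{i<k} (aᵢ₊₁ - bᵢ)`. Since `rᵢ₊₁ - rᵢ ≥ 1` we have `bᵢ ≤ e^{-2α} aᵢ₊₁`, and `aᵢ₊₁ ≥ 1`,
so each regrouped term is at least `1 - e^{-2α} > 0`; as `b_k ≤ 1`, the sums grow linearly in `k`.
-/

lemma le_sum_Icc_sub_of_le_sub_succ {f g : ℕ → ℝ} {c : ℝ}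
    (hstep : ∀ i, 1 ≤ i → c ≤ f (i + 1) - g i) {k : ℕ} (hk : 1 ≤ k) :
    f 1 - g k + (k - 1) * c ≤ ∑ i ∈ Icc 1 k, (f i - g i) := by
  induction k, hk using Nat.le_induction with
  | base => simp
  | succ n hn ih =>
    rw [sum_Icc_succ_top (by omega)]
    push_cast
    linarith [hstep n hn]

lemma tendsto_sum_Icc_sub_atTop {f g : ℕ → ℝ} {c B : ℝ} (hc : 0 < c)
    (hstep : ∀ i, 1 ≤ i → c ≤ f (i + 1) - g i) (hg : ∀ i, 1 ≤ i → g i ≤ B) :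
    Tendsto (fun k : ℕ => ∑ i ∈ Icc 1 k, (f i - g i)) atTop atTop := by
  have hlin : Tendsto (fun k : ℕ => f 1 - B + (k - 1) * c) atTop atTop :=
    tendsto_atTop_add_const_left _ _
      ((tendsto_atTop_add_const_right _ (-1) tendsto_natCast_atTop_atTop).atTop_mul_const hc)
  refine tendsto_atTop_mono' _ ?_ hlin
  filter_upwards [eventually_ge_atTop 1] with k hk
  linarith [le_sum_Icc_sub_of_le_sub_succ hstep hk, hg k hk]

lemma one_sub_exp_neg_le_mul_exp_sub {β s t w : ℝ} (hβ : 0 ≤ β) (hst : s + 1 ≤ t)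
    (hw : 1 ≤ w * exp (β * t)) :
    1 - exp (-β) ≤ w * exp (β * t) - w * exp (β * s) := by
  have hw0 : 0 ≤ w := by
    by_contra! h
    nlinarith [exp_pos (β * t)]
  have hexp : exp (β * s) ≤ exp (β * t) * exp (-β) := by
    rw [← exp_add]
    exact exp_le_exp.mpr (by nlinarith)
  have hq : exp (-β) ≤ 1 := exp_le_one_iff.mpr (by linarith)
  calc 1 - exp (-β) ≤ w * exp (β * t) * (1 - exp (-β)) :=
        le_mul_of_one_le_left (by linarith) hw
    _ = w * exp (β * t) - w * (exp (β * t) * exp (-β)) := by ring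
    _ ≤ w * exp (β * t) - w * exp (β * s) := by gcongr

/-- Divergence of the partial sums: under the hypotheses `r (i+1) ≥ r i + 1`,
`v (i+1) * exp (2α r i) ≤ 1` and `v i * exp (2α r i) ≥ 1` for all `i ≥ 1`,
the partial sums `∑_{i=1}^{k} (v i − v (i+1)) * exp (2α r i)` tend to `+∞`. -/
theorem stmt5 (α : ℝ) (hα : 0 < α) (r v : ℕ → ℝ)
    (hr : ∀ i, 1 ≤ i → r i + 1 ≤ r (i + 1))
    (hv1 : ∀ i, 1 ≤ i → v (i + 1) * Real.exp (2 * α * r i) ≤ 1)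
    (hv2 : ∀ i, 1 ≤ i → 1 ≤ v i * Real.exp (2 * α * r i)) :
    Filter.Tendsto
      (fun k : ℕ => ∑ i ∈ Finset.Icc 1 k, (v i - v (i + 1)) * Real.exp (2 * α * r i))
      Filter.atTop Filter.atTop := by
  have hc : 0 < 1 - exp (-(2 * α)) := sub_pos.mpr (exp_lt_one_iff.mpr (by linarith))
  simp_rw [sub_mul]
  exact tendsto_sum_Icc_sub_atTop hc
    (fun i hi => one_sub_exp_neg_le_mul_exp_sub (by positivity) (hr i hi) (hv2 (i + 1) (by omega)))
    hv1
end
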